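/- arXiv:2403.11148 — 4 statements merged into one kernel-verified Lean document; each statement's English description precedes it below -/
import Mathlib

section
/- Let G be generated by finite set S closed under inversion, let φ be an expanding endomorphism of G with constant C ≥ 4 and image H = φ(G), let X be a set of right coset representatives of H in G containing e, let R be the maximal word length l_S(x) over x ∈ X, and let N = {g ∈ G : l_S(g) ≤ R}. Then for all a, b ∈ N and x ∈ X there exists a unique y ∈ X such that x·a·b·y⁻¹ ∈ H, and the element φ⁻¹(x·a·b·y⁻¹) belongs to N. -/
/-- Word length of `g` with respect to a generating set `S`. -/
noncomputable def wordLength {G : Type*} [Group G] (S : Set G) (g : G) : ℕ :=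
  sInf {n | ∃ w : List G, (∀ a ∈ w, a ∈ S) ∧ w.length = n ∧ w.prod = g}

lemma wl_nonempty {G : Type*} [Group G] {S : Set G}
    (hgen : Subgroup.closure S = ⊤) (hsym : ∀ a ∈ S, a⁻¹ ∈ S) (g : G) :
    {n | ∃ w : List G, (∀ a ∈ w, a ∈ S) ∧ w.length = n ∧ w.prod = g}.Nonempty := by
  have hg : g ∈ Subgroup.closure S := by rw [hgen]; trivial
  have hg' : g ∈ Submonoid.closure (S ∪ S⁻¹) := by
    rw [← Subgroup.closure_toSubmonoid] at *; exact hg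
  obtain ⟨l, hl, hprod⟩ := Submonoid.exists_list_of_mem_closure hg'
  refine ⟨l.length, l, ?_, rfl, hprod⟩
  intro a ha
  rcases hl a ha with h | h
  · exact h
  · have := hsym _ h; simpa using this

lemma wl_spec {G : Type*} [Group G] {S : Set G}
    (hgen : Subgroup.closure S = ⊤) (hsym : ∀ a ∈ S, a⁻¹ ∈ S) (g : G) :
    ∃ w : List G, (∀ a ∈ w, a ∈ S) ∧ w.length = wordLength S g ∧ w.prod = g :=
  Nat.sInf_mem (wl_nonempty hgen hsym g)

lemma wl_le {G : Type*} [Group G] {S : Set G} {g : G} {w : List G}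
    (hw : ∀ a ∈ w, a ∈ S) (hp : w.prod = g) : wordLength S g ≤ w.length :=
  Nat.sInf_le ⟨w, hw, rfl, hp⟩

lemma wl_mul_le {G : Type*} [Group G] {S : Set G}
    (hgen : Subgroup.closure S = ⊤) (hsym : ∀ a ∈ S, a⁻¹ ∈ S) (g h : G) :
    wordLength S (g * h) ≤ wordLength S g + wordLength S h := by
  obtain ⟨w1, hw1, hl1, hp1⟩ := wl_spec hgen hsym g
  obtain ⟨w2, hw2, hl2, hp2⟩ := wl_spec hgen hsym h
  have := wl_le (g := g * h) (w := w1 ++ w2)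
    (by intro a ha; rcases List.mem_append.mp ha with h | h
        · exact hw1 a h
        · exact hw2 a h)
    (by rw [List.prod_append, hp1, hp2])
  simpa [hl1, hl2] using this

lemma wl_inv_le {G : Type*} [Group G] {S : Set G}
    (hgen : Subgroup.closure S = ⊤) (hsym : ∀ a ∈ S, a⁻¹ ∈ S) (g : G) :
    wordLength S g⁻¹ ≤ wordLength S g := by
  obtain ⟨w, hw, hl, hp⟩ := wl_spec hgen hsym g
  have := wl_le (g := g⁻¹) (w := (w.map Inv.inv).reverse)
    (by intro a ha
        simp only [List.mem_reverse, List.mem_map] at ha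
        obtain ⟨b, hb, rfl⟩ := ha
        exact hsym b (hw b hb))
    (by rw [← List.prod_inv_reverse, hp])
  simpa [hl] using this

theorem rewriting_rule_exists {G : Type*} [Group G] (S : Finset G)
    (hgen : Subgroup.closure (S : Set G) = ⊤) (hsym : ∀ a ∈ S, a⁻¹ ∈ S)
    (φ : G →* G) (hidx : φ.range.FiniteIndex) (C : ℝ) (hC : 4 ≤ C)
    (hexp : ∀ g : G, C * (wordLength (S : Set G) g : ℝ) ≤ (wordLength (S : Set G) (φ g) : ℝ))
    -- X is a set of right coset representatives for H = φ(G) in G containing e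
    (X : Set G) (h1X : (1 : G) ∈ X)
    (hX : ∀ g : G, ∃! x : G, x ∈ X ∧ ∃ h ∈ φ.range, g = h * x)
    -- R is the maximal word length of a coset representative
    (R : ℕ) (hR : IsGreatest (wordLength (S : Set G) '' X) R) :
    -- with N = {g : l_S(g) ≤ R}: for all a, b ∈ N and x ∈ X there is a unique y ∈ X
    -- with x·a·b·y⁻¹ ∈ H, and moreover φ⁻¹(x·a·b·y⁻¹) ∈ N
    ∀ a ∈ {g : G | wordLength (S : Set G) g ≤ R},
      ∀ b ∈ {g : G | wordLength (S : Set G) g ≤ R},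
        ∀ x ∈ X,
          (∃! y : G, y ∈ X ∧ x * a * b * y⁻¹ ∈ φ.range) ∧
          (∀ y ∈ X, x * a * b * y⁻¹ ∈ φ.range →
            ∀ g : G, φ g = x * a * b * y⁻¹ → wordLength (S : Set G) g ≤ R) := by
  have hsym' : ∀ a ∈ (S : Set G), a⁻¹ ∈ (S : Set G) := by
    intro a ha; exact_mod_cast hsym a (by exact_mod_cast ha)
  intro a ha b hb x hx
  have key : ∀ y, (y ∈ X ∧ x * a * b * y⁻¹ ∈ φ.range) ↔
      (y ∈ X ∧ ∃ h ∈ φ.range, x * a * b = h * y) := by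
    intro y
    constructor
    · rintro ⟨hy, hr⟩
      exact ⟨hy, x * a * b * y⁻¹, hr, by group⟩
    · rintro ⟨hy, h, hh, heq⟩
      refine ⟨hy, ?_⟩
      have : x * a * b * y⁻¹ = h := by rw [heq]; group
      rw [this]; exact hh
  constructor
  · obtain ⟨y, hy, huniq⟩ := hX (x * a * b)
    exact ⟨y, (key y).mpr hy, fun z hz => huniq z ((key z).mp hz)⟩
  · intro y hy hr g hg
    -- bound word length of x*a*b*y⁻¹
    have hxR : wordLength (S : Set G) x ≤ R := hR.2 ⟨x, hx, rfl⟩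
    have hyR : wordLength (S : Set G) y ≤ R := hR.2 ⟨y, hy, rfl⟩
    have hbound : wordLength (S : Set G) (x * a * b * y⁻¹) ≤ 4 * R := by
      calc wordLength (S : Set G) (x * a * b * y⁻¹)
          ≤ wordLength (S : Set G) (x * a * b) + wordLength (S : Set G) y⁻¹ :=
            wl_mul_le hgen hsym' _ _
        _ ≤ (wordLength (S : Set G) (x * a) + wordLength (S : Set G) b)
              + wordLength (S : Set G) y := by
            have h1 := wl_mul_le hgen hsym' (x * a) b
            have h2 := wl_inv_le hgen hsym' y
            omega
        _ ≤ ((wordLength (S : Set G) x + wordLength (S : Set G) a)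
              + wordLength (S : Set G) b) + wordLength (S : Set G) y := by
            have := wl_mul_le hgen hsym' x a; omega
        _ ≤ 4 * R := by
            simp only [Set.mem_setOf_eq] at ha hb; omega
    -- expanding
    have h1 := hexp g
    rw [hg] at h1
    have h2 : (4 : ℝ) * (wordLength (S : Set G) g : ℝ) ≤ 4 * (R : ℝ) := by
      calc (4 : ℝ) * (wordLength (S : Set G) g : ℝ)
          ≤ C * (wordLength (S : Set G) g : ℝ) := by
            apply mul_le_mul_of_nonneg_right hC (by positivity)
        _ ≤ (wordLength (S : Set G) (x * a * b * y⁻¹) : ℝ) := h1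
        _ ≤ ((4 * R : ℕ) : ℝ) := by exact_mod_cast hbound
        _ = 4 * (R : ℝ) := by push_cast; ring
    have : (wordLength (S : Set G) g : ℝ) ≤ (R : ℝ) := by linarith
    exact_mod_cast this
end

section
/- With notation as in the rewriting setup: if w = a₁b₁a₂b₂⋯a_k b_k with a_i, b_i ∈ N, and one defines y₀ = e and inductively y_i ∈ X and c_i ∈ N by the condition y_{i-1}·a_i·b_i·y_i⁻¹ ∈ H with c_i = φ⁻¹(y_{i-1}·a_i·b_i·y_i⁻¹), then whenever the final representative y_k = e, the element of G represented by w equals φ(c₁c₂⋯c_k). Consequently w = e in G if and only if y_k = e and c₁c₂⋯c_k = e in G. -/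
theorem rewriting_correctness {G : Type*} [Group G]
    (φ : G →* G) (hinj : Function.Injective φ) (hidx : φ.range.FiniteIndex)
    -- X is a set of right coset representatives for H = φ(G) containing e
    (X : Set G) (h1X : (1 : G) ∈ X)
    (hX : ∀ g : G, ∃! x : G, x ∈ X ∧ ∃ h ∈ φ.range, g = h * x)
    -- N: finite symmetric generating set containing the coset representatives,
    -- with the rewriting property
    (N : Set G) (hNfin : N.Finite) (hNsym : ∀ g ∈ N, g⁻¹ ∈ N)
    (hNgen : Subgroup.closure N = ⊤) (hXN : X ⊆ N)
    (hrule : ∀ a ∈ N, ∀ b ∈ N, ∀ x ∈ X,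
      ∃! y : G, y ∈ X ∧ x * a * b * y⁻¹ ∈ φ.range ∧
        ∀ g : G, φ g = x * a * b * y⁻¹ → g ∈ N)
    -- the data of one round of rewriting: w = a₁b₁⋯a_k b_k, representatives y_i, outputs c_i
    (k : ℕ) (a b y c : ℕ → G)
    (ha : ∀ i < k, a i ∈ N) (hb : ∀ i < k, b i ∈ N)
    (hy0 : y 0 = 1) (hyX : ∀ i < k, y (i + 1) ∈ X)
    (hcN : ∀ i < k, c i ∈ N)
    (hc : ∀ i < k, φ (c i) = y i * a i * b i * (y (i + 1))⁻¹) :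
    (y k = 1 →
      ((List.range k).map (fun i => a i * b i)).prod = φ (((List.range k).map c).prod)) ∧
    (((List.range k).map (fun i => a i * b i)).prod = 1 ↔
      y k = 1 ∧ ((List.range k).map c).prod = 1) := by
  have key : ∀ m, m ≤ k →
      ((List.range m).map (fun i => a i * b i)).prod =
        φ (((List.range m).map c).prod) * y m := by
    intro m
    induction m with
    | zero => intro _; simp [hy0]
    | succ m ih =>
      intro hm
      have hm' : m ≤ k := Nat.le_of_succ_le hm
      have hmk : m < k := hm
      rw [List.range_succ, List.map_append, List.prod_append,
        List.map_append, List.prod_append]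
      simp only [List.map_cons, List.map_nil, List.prod_cons, List.prod_nil, mul_one]
      rw [map_mul, ih hm', hc m hmk]
      group
  have hk := key k le_rfl
  refine ⟨fun h => by rw [hk, h, mul_one], ?_⟩
  constructor
  · intro h
    have hmul : φ (((List.range k).map c).prod) * y k = 1 := hk.symm.trans h
    have hyk : y k = (φ (((List.range k).map c).prod))⁻¹ :=
      eq_inv_of_mul_eq_one_right hmul
    have hrange : y k ∈ φ.range := by
      rw [hyk, ← map_inv]; exact ⟨_, rfl⟩
    have hykX : y k ∈ X := by
      cases k with
      | zero => rw [hy0]; exact h1X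
      | succ n => exact hyX n (Nat.lt_succ_self n)
    have hyk1 : y k = 1 := by
      obtain ⟨x, _, hux⟩ := hX (y k)
      have e1 := hux (y k) ⟨hykX, 1, Subgroup.one_mem _, (one_mul _).symm⟩
      have e2 := hux 1 ⟨h1X, y k, hrange, (mul_one _).symm⟩
      rw [e1, e2]
    refine ⟨hyk1, hinj ?_⟩
    rw [map_one]
    rwa [hyk1, mul_one] at hmul
  · rintro ⟨h1, h2⟩
    rw [hk, h1, h2, map_one, mul_one]
end

section
/- Let G be a group generated by symmetric finite set S, fix a ∈ S, and let B_n be a set of words of even length at most n over S representing pairwise distinct non-trivial elements. For w ∈ B_n put z_w = w·(aa⁻¹)^{2n−|w|}·w⁻¹, a word of length 4n representing the identity. If w₁ ≠ w₂ in B_n, if x' is a prefix of z_{w₁} of even length i with n < i < 3n and y' is a suffix of z_{w₂} of length 4n − j with j even and n < j < 3n, then the word x'·y' does not represent the identity in G. -/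
private lemma pad_take_prod {G : Type*} [Group G] (a : G) :
    ∀ (t k : ℕ), t ≤ k →
      (((List.replicate k ([a, a⁻¹] : List G)).flatten).take (2 * t)).prod = 1 := by
  intro t
  induction t with
  | zero => intro k _; simp
  | succ t ih =>
    intro k hk
    obtain ⟨k', rfl⟩ : ∃ k', k = k' + 1 := ⟨k - 1, by omega⟩
    have : 2 * (t + 1) = (2 * t) + 1 + 1 := by ring
    simp only [List.replicate_succ, List.flatten_cons, this]
    simp [List.take_succ_cons, ih k' (by omega), mul_assoc]

private lemma take_prod_eq {G : Type*} [Group G] (a : G) (n : ℕ) (w : List G)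
    (hweven : Even w.length) (hwlen : w.length ≤ n)
    (i : ℕ) (hieven : Even i) (hi1 : n < i) (hi2 : i < 3 * n) :
    ((w ++ (List.replicate (2 * n - w.length) [a, a⁻¹]).flatten
        ++ (w.map (·⁻¹)).reverse).take i).prod = w.prod := by
  set P := (List.replicate (2 * n - w.length) ([a, a⁻¹] : List G)).flatten with hP
  have hPlen : P.length = 2 * (2 * n - w.length) := by
    simp [hP, List.length_flatten, Function.comp]
    ring
  have hwi : w.length ≤ i := by omega
  rw [List.append_assoc, List.take_append, List.take_of_length_le hwi]
  have hiP : i - w.length ≤ P.length := by omega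
  have h1 : (P ++ (w.map (·⁻¹)).reverse).take (i - w.length) = P.take (i - w.length) := by
    rw [List.take_append]
    simp [Nat.sub_eq_zero_of_le hiP]
  rw [h1, List.prod_append]
  obtain ⟨t, ht⟩ := hieven
  obtain ⟨s, hs⟩ := hweven
  have : i - w.length = 2 * (t - s) := by omega
  rw [this, hP, pad_take_prod a (t - s) (2 * n - w.length) (by omega), mul_one]

theorem crossing_word_nontrivial {G : Type*} [Group G] (S : Finset G)
    (hgen : Subgroup.closure (S : Set G) = ⊤) (hsym : ∀ a ∈ S, a⁻¹ ∈ S)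
    (a : G) (ha : a ∈ S) (n : ℕ)
    (w₁ w₂ : List G)
    (hw₁S : ∀ s ∈ w₁, s ∈ S) (hw₂S : ∀ s ∈ w₂, s ∈ S)
    (hw₁even : Even w₁.length) (hw₂even : Even w₂.length)
    (hw₁len : w₁.length ≤ n) (hw₂len : w₂.length ≤ n)
    (hw₁ne : w₁.prod ≠ 1) (hw₂ne : w₂.prod ≠ 1)
    -- w₁ and w₂ represent distinct elements
    (hne : w₁.prod ≠ w₂.prod)
    -- z_w = w (a a⁻¹)^{2n - |w|} w⁻¹, a word of length 4n representing the identity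
    (z : List G → List G)
    (hz : ∀ w : List G, z w =
      w ++ (List.replicate (2 * n - w.length) [a, a⁻¹]).flatten ++ (w.map (·⁻¹)).reverse)
    (i j : ℕ) (hieven : Even i) (hjeven : Even j)
    (hi1 : n < i) (hi2 : i < 3 * n) (hj1 : n < j) (hj2 : j < 3 * n) :
    ((z w₁).take i ++ (z w₂).drop j).prod ≠ 1 := by
  have h1 : ((z w₁).take i).prod = w₁.prod := by
    rw [hz]; exact take_prod_eq a n w₁ hw₁even hw₁len i hieven hi1 hi2
  have hzfull : (z w₂).prod = 1 := by
    rw [hz, List.prod_append, List.prod_append]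
    have hpad : ((List.replicate (2 * n - w₂.length) ([a, a⁻¹] : List G)).flatten).prod = 1 := by
      rw [List.prod_flatten]
      simp
    have hinv : ((w₂.map (·⁻¹)).reverse).prod = w₂.prod⁻¹ := (List.prod_inv_reverse w₂).symm
    rw [hpad, hinv, mul_one, mul_inv_cancel]
  have h2 : ((z w₂).take j).prod = w₂.prod := by
    rw [hz]; exact take_prod_eq a n w₂ hw₂even hw₂len j hjeven hj1 hj2
  have h3 : ((z w₂).drop j).prod = w₂.prod⁻¹ := by
    have hsplit : ((z w₂).take j).prod * ((z w₂).drop j).prod = 1 := by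
      rw [← List.prod_append, List.take_append_drop, hzfull]
    rw [h2] at hsplit
    exact eq_inv_of_mul_eq_one_right hsplit
  rw [List.prod_append, h1, h3]
  intro h
  exact hne (eq_of_mul_inv_eq_one h)
end

section
/- In the Basilica automaton over X = {0,1} with states {e, a, b}, where a maps 0↦1 going to state e and 1↦0 going to state b, and b maps 0↦0 going to state e and 1↦1 going to state a, the sections of the word ab satisfy: (ab)|_0 and (ab)|_1 are, up to reordering, the words eb and ae (after the output permutation is accounted for); consequently, after deleting trivial letters, each level-m section of (ab)^k for the generated group has total letter count summing, over all v ∈ X^m, to exactly 2k for every m ≥ 0 — i.e., the Basilica automaton is bounded but not strongly contracting on these words. -/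
/-- An automaton (Mealy machine) over alphabet `X` with state set `S`:
transition map `t` and output map `o`. -/
structure Automaton (S X : Type*) where
  t : S → X → S
  o : S → X → X

namespace Automaton

variable {S X : Type*} (A : Automaton S X)

/-- Extended transition map on words: `t(s,ε)=s`, `t(s,xv)=t(t(s,x),v)`. -/
def tw : S → List X → S
  | s, [] => s
  | s, x :: v => tw (A.t s x) v

/-- Extended output map on words: `o(s,ε)=ε`, `o(s,xv)=o(s,x)·o(t(s,x),v)`. -/
def ow : S → List X → List X
  | _, [] => []
  | s, x :: v => A.o s x :: ow (A.t s x) v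

/-- Transition map extended to words of states: `t(sw,v)=t(s,v)·t(w,o(s,v))`. -/
def tws : List S → List X → List S
  | [], _ => []
  | s :: w, v => A.tw s v :: tws w (A.ow s v)

/-- Output map extended to words of states: `o(ε,v)=v`, `o(sw,v)=o(w,o(s,v))`. -/
def ows : List S → List X → List X
  | [], v => v
  | s :: w, v => ows w (A.ow s v)

end Automaton

/-- States of the Basilica automaton. -/
inductive BasState : Type
  | e | a | b
  deriving DecidableEq

open BasState in
/-- The Basilica automaton over X = {0,1} (encoded as `Bool`):
`a`: 0|1 → e, 1|0 → b; `b`: 0|0 → e, 1|1 → a; `e` trivial. -/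
def basAutomaton : Automaton BasState Bool where
  t s x :=
    match s, x with
    | e, _ => e
    | a, false => e
    | a, true => b
    | b, false => e
    | b, true => a
  o s x :=
    match s with
    | a => !x
    | _ => x

namespace BasilicaAux

open BasState

@[simp] lemma tw_e : ∀ v : List Bool, basAutomaton.tw e v = e
  | [] => rfl
  | _ :: v => tw_e v

@[simp] lemma ow_length (s : BasState) : ∀ v : List Bool,
    (basAutomaton.ow s v).length = v.length
  | [] => rfl
  | _ :: v => by simp [Automaton.ow, ow_length _ v]

lemma o_inj (s : BasState) : Function.Injective (basAutomaton.o s) := by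
  intro x y h
  cases s <;> cases x <;> cases y <;> simp_all [basAutomaton]

lemma ow_inj (s : BasState) : Function.Injective (basAutomaton.ow s) := by
  intro v1
  induction v1 generalizing s with
  | nil => intro v2 h; cases v2 with
    | nil => rfl
    | cons y w => simp [Automaton.ow] at h
  | cons x v ih =>
    intro v2 h
    cases v2 with
    | nil => simp [Automaton.ow] at h
    | cons y w =>
      simp only [Automaton.ow, List.cons.injEq] at h
      obtain ⟨h1, h2⟩ := h
      obtain rfl := o_inj s h1
      exact congrArg (x :: ·) (ih _ h2)

@[simp] lemma ows_length (w : List BasState) : ∀ v : List Bool,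
    (basAutomaton.ows w v).length = v.length := by
  induction w with
  | nil => intro v; rfl
  | cons s w ih => intro v; simp [Automaton.ows, ih]

lemma ows_inj (w : List BasState) : Function.Injective (basAutomaton.ows w) := by
  induction w with
  | nil => intro v1 v2 h; exact h
  | cons s w ih => intro v1 v2 h; exact ow_inj s (ih h)

lemma tws_append (A : Automaton BasState Bool) (w1 w2 : List BasState) (v : List Bool) :
    A.tws (w1 ++ w2) v = A.tws w1 v ++ A.tws w2 (A.ows w1 v) := by
  induction w1 generalizing v with
  | nil => rfl
  | cons s w ih => simp [Automaton.tws, Automaton.ows, ih]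

/-- Summing over all level-`m` inputs is invariant under the (bijective) output map. -/
lemma sum_ows (w : List BasState) (m : ℕ) (F : List Bool → ℕ) :
    ∑ f : Fin m → Bool, F (basAutomaton.ows w (List.ofFn f)) =
      ∑ f : Fin m → Bool, F (List.ofFn f) := by
  have hlen : ∀ f : Fin m → Bool, (basAutomaton.ows w (List.ofFn f)).length = m := by
    intro f; simp
  set σ : (Fin m → Bool) → (Fin m → Bool) :=
    fun f i => (basAutomaton.ows w (List.ofFn f)).get ⟨i, by rw [hlen]; exact i.isLt⟩ with hσ
  have hofn : ∀ f : Fin m → Bool, List.ofFn (σ f) = basAutomaton.ows w (List.ofFn f) := by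
    intro f
    apply List.ext_getElem
    · simp [hlen]
    · intro i h1 h2
      simp [hσ, List.getElem_ofFn]
  have hinj : Function.Injective σ := by
    intro f1 f2 h
    have : basAutomaton.ows w (List.ofFn f1) = basAutomaton.ows w (List.ofFn f2) := by
      rw [← hofn, ← hofn, h]
    have := ows_inj w this
    exact List.ofFn_injective this
  have hbij : Function.Bijective σ := (Finite.injective_iff_bijective).mp hinj
  exact Fintype.sum_bijective σ hbij _ _ (fun f => by rw [hofn f])

/-- The single-letter level-`m` sections of `a` and of `b` each contain exactly one
nontrivial letter in total. -/
lemma key : ∀ m : ℕ,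
    (∑ f : Fin m → Bool, (if basAutomaton.tw a (List.ofFn f) = e then 0 else 1) = 1) ∧
    (∑ f : Fin m → Bool, (if basAutomaton.tw b (List.ofFn f) = e then 0 else 1) = 1) := by
  intro m
  induction m with
  | zero => constructor <;> simp [Automaton.tw]
  | succ n ih =>
    have hsplit : ∀ s : BasState,
        ∑ f : Fin (n+1) → Bool, (if basAutomaton.tw s (List.ofFn f) = e then 0 else 1) =
        ∑ p : Bool × (Fin n → Bool),
          (if basAutomaton.tw s (p.1 :: List.ofFn p.2) = e then 0 else 1) := by
      intro s
      refine (Fintype.sum_equiv (Fin.consEquiv (fun _ => Bool)) _ _ ?_).symm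
      intro p
      congr 1
      rw [List.ofFn_succ]
      simp [Fin.consEquiv]
    constructor
    · rw [hsplit, Fintype.sum_prod_type]
      simp only [Fintype.sum_bool]
      have h1 : ∀ v : List Bool, basAutomaton.tw a (true :: v) = basAutomaton.tw b v :=
        fun v => rfl
      have h2 : ∀ v : List Bool, basAutomaton.tw a (false :: v) = e :=
        fun v => tw_e v
      simp only [h1, h2, if_pos rfl]
      simpa using ih.2
    · rw [hsplit, Fintype.sum_prod_type]
      simp only [Fintype.sum_bool]
      have h1 : ∀ v : List Bool, basAutomaton.tw b (true :: v) = basAutomaton.tw a v :=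
        fun v => rfl
      have h2 : ∀ v : List Bool, basAutomaton.tw b (false :: v) = e :=
        fun v => tw_e v
      simp only [h1, h2, if_pos rfl]
      simpa using ih.1

lemma countP_pair (x y : BasState) :
    ([x, y].countP (· ≠ e)) =
      (if x = e then 0 else 1) + (if y = e then 0 else 1) := by
  cases x <;> cases y <;> decide

/-- Total nontrivial letter count over all level-`m` sections of the word `ab` is `2`. -/
lemma N_ab (m : ℕ) :
    ∑ f : Fin m → Bool, ((basAutomaton.tws [a, b] (List.ofFn f)).countP (· ≠ e)) = 2 := by
  have htws : ∀ v : List Bool, basAutomaton.tws [a, b] v =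
      [basAutomaton.tw a v, basAutomaton.tw b (basAutomaton.ow a v)] := fun v => rfl
  simp only [htws, countP_pair]
  rw [Finset.sum_add_distrib, (key m).1]
  have : ∑ f : Fin m → Bool,
      (if basAutomaton.tw b (basAutomaton.ow a (List.ofFn f)) = e then 0 else 1) =
      ∑ f : Fin m → Bool, (if basAutomaton.tw b (List.ofFn f) = e then 0 else 1) := by
    have := sum_ows [a] m (fun v => if basAutomaton.tw b v = e then 0 else 1)
    exact this
  rw [this, (key m).2]

end BasilicaAux

open BasState in
theorem basilica_bounded_not_strongly_contracting :
    -- the two first-level sections of the word ab are, up to reordering,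
    -- the words with non-trivial letters a and b respectively
    ({ (basAutomaton.tws [a, b] [false]).filter (· ≠ e),
       (basAutomaton.tws [a, b] [true]).filter (· ≠ e) } : Multiset (List BasState)) =
      ({ [a], [b] } : Multiset (List BasState)) ∧
    -- after deleting trivial letters, the total letter count of all level-m sections
    -- of (ab)^k is exactly 2k for every m ≥ 0
    ∀ (m k : ℕ),
      ∑ f : Fin m → Bool,
        ((basAutomaton.tws ((List.replicate k [a, b]).flatten) (List.ofFn f)).countP
          (· ≠ e)) = 2 * k := by
  refine ⟨by decide, ?_⟩
  intro m k
  induction k with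
  | zero => simp [Automaton.tws]
  | succ n ih =>
    have hrep : (List.replicate (n + 1) [a, b]).flatten =
        [a, b] ++ (List.replicate n [a, b]).flatten := by
      simp [List.replicate_succ]
    simp only [hrep, BasilicaAux.tws_append, List.countP_append]
    rw [Finset.sum_add_distrib, BasilicaAux.N_ab m]
    have : ∑ f : Fin m → Bool,
        ((basAutomaton.tws ((List.replicate n [a, b]).flatten)
          (basAutomaton.ows [a, b] (List.ofFn f))).countP (· ≠ e)) = 2 * n := by
      rw [BasilicaAux.sum_ows [a, b] m
        (fun v => (basAutomaton.tws ((List.replicate n [a, b]).flatten) v).countP (· ≠ e))]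
      exact ih
    rw [this]
    ring
end
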